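/- S¹-reduction of Chaplygin's marble to (a, γ)-variables: let Ω : ℝ → ℝ³ be continuous and L, γ : ℝ → ℝ³ differentiable with L̇ = L × Ω, γ̇ = γ × Ω, and ⟨γ(0), γ(0)⟩ = 1. Then ⟨γ(t), γ(t)⟩ = 1 for all t, ℓ₃ := ⟨L(t), γ(t)⟩ is constant in t, and the vector a(t) := γ(t) × L(t) satisfies L(t) = a(t) × γ(t) + ℓ₃ γ(t) and the reduced equation ȧ(t) = −⟨Ω(t), L(t)⟩ γ(t) + ⟨γ(t), Ω(t)⟩ L(t) = −2H γ(t) + ⟨γ(t), Ω(t)⟩ (a × γ + ℓ₃ γ), where 2H = ⟨Ω, L⟩. -/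

import Mathlib

open Matrix

/-- Euclidean inner product on ℝ³. -/
def dot3 (u v : Fin 3 → ℝ) : ℝ := u 0 * v 0 + u 1 * v 1 + u 2 * v 2

/-- Cross product on ℝ³. -/
def cross3 (u v : Fin 3 → ℝ) : Fin 3 → ℝ :=
  ![u 1 * v 2 - u 2 * v 1, u 2 * v 0 - u 0 * v 2, u 0 * v 1 - u 1 * v 0]

/-! Both `L` and `γ` are carried along by the same time-dependent rotation with angular velocity
`Ω`. Rotations preserve dot and cross products, so `⟨γ, γ⟩` and `⟨L, γ⟩` are conserved and
`a = γ × L` obeys the same law `ȧ = a × Ω`; expanding the triple products `(γ × L) × Ω` and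
`(γ × L) × γ` gives the reduced equation and the decomposition of `L`. -/

lemma dot3_eq_dotProduct (u v : Fin 3 → ℝ) : dot3 u v = u ⬝ᵥ v := by
  simp [dot3, dotProduct, Fin.sum_univ_three]

lemma cross3_eq_crossProduct (u v : Fin 3 → ℝ) : cross3 u v = u ⨯₃ v := rfl

section Calculus

variable {E F G : Type*} [NormedAddCommGroup E] [NormedSpace ℝ E] [FiniteDimensional ℝ E]
  [NormedAddCommGroup F] [NormedSpace ℝ F] [FiniteDimensional ℝ F]
  [NormedAddCommGroup G] [NormedSpace ℝ G]

theorem LinearMap.hasDerivAt_apply₂ (B : E →ₗ[ℝ] F →ₗ[ℝ] G) {u : ℝ → E} {v : ℝ → F}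
    {u' : E} {v' : F} {t : ℝ} (hu : HasDerivAt u u' t) (hv : HasDerivAt v v' t) :
    HasDerivAt (fun s => B (u s) (v s)) (B (u t) v' + B u' (v t)) t :=
  B.toContinuousBilinearMap.hasDerivAt_of_bilinear (fun _ => hu) (fun _ => hv)

theorem eq_of_forall_hasDerivAt_zero {f : ℝ → G} (hf : ∀ t, HasDerivAt f 0 t) (s t : ℝ) :
    f s = f t :=
  is_const_of_deriv_eq_zero (fun t => (hf t).differentiableAt) (fun t => (hf t).deriv) s t

end Calculus

section Rotation

variable {u v : ℝ → Fin 3 → ℝ} {w : Fin 3 → ℝ} {t : ℝ}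

theorem hasDerivAt_dotProduct_of_rotation (hu : HasDerivAt u (u t ⨯₃ w) t)
    (hv : HasDerivAt v (v t ⨯₃ w) t) : HasDerivAt (fun s => u s ⬝ᵥ v s) 0 t := by
  refine ((dotProductBilin ℝ ℝ).hasDerivAt_apply₂ hu hv).congr_deriv ?_
  simp only [dotProductBilin_apply_apply]
  rw [triple_product_permutation, dotProduct_comm (u t ⨯₃ w), ← cross_anticomm,
    dotProduct_neg, neg_add_cancel]

theorem hasDerivAt_crossProduct_of_rotation (hu : HasDerivAt u (u t ⨯₃ w) t)
    (hv : HasDerivAt v (v t ⨯₃ w) t) :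
    HasDerivAt (fun s => u s ⨯₃ v s) ((u t ⨯₃ v t) ⨯₃ w) t := by
  refine ((crossProduct (R := ℝ)).hasDerivAt_apply₂ hu hv).congr_deriv ?_
  rw [leibniz_cross, ← cross_anticomm (v t) (u t ⨯₃ w), add_neg_cancel_right]

end Rotation

theorem eq_cross_cross_add_smul_of_dotProduct_self_eq_one {v : Fin 3 → ℝ} (hv : v ⬝ᵥ v = 1)
    (u : Fin 3 → ℝ) : u = (v ⨯₃ u) ⨯₃ v + (u ⬝ᵥ v) • v := by
  rw [cross_cross_eq_smul_sub_smul, hv, one_smul, sub_add_cancel]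

theorem marble_s1_reduction_general
    (Ω : ℝ → Fin 3 → ℝ)
    (L γ : ℝ → Fin 3 → ℝ)
    (hL : ∀ t, HasDerivAt L (cross3 (L t) (Ω t)) t)
    (hγ : ∀ t, HasDerivAt γ (cross3 (γ t) (Ω t)) t)
    (hγ0 : dot3 (γ 0) (γ 0) = 1) :
    (∀ t, dot3 (γ t) (γ t) = 1) ∧
    (∀ s t, dot3 (L s) (γ s) = dot3 (L t) (γ t)) ∧
    (∀ t, L t = cross3 (cross3 (γ t) (L t)) (γ t) + dot3 (L t) (γ t) • γ t) ∧
    (∀ t, HasDerivAt (fun s => cross3 (γ s) (L s))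
        (-(dot3 (Ω t) (L t)) • γ t + dot3 (γ t) (Ω t) • L t) t) ∧
    (∀ t, -(dot3 (Ω t) (L t)) • γ t + dot3 (γ t) (Ω t) • L t
        = -(dot3 (Ω t) (L t)) • γ t
          + dot3 (γ t) (Ω t)
              • (cross3 (cross3 (γ t) (L t)) (γ t) + dot3 (L t) (γ t) • γ t)) := by
  simp only [dot3_eq_dotProduct, cross3_eq_crossProduct] at hL hγ hγ0 ⊢
  have hunit (t : ℝ) : γ t ⬝ᵥ γ t = 1 :=
    (eq_of_forall_hasDerivAt_zero
      (fun s => hasDerivAt_dotProduct_of_rotation (hγ s) (hγ s)) t 0).trans hγ0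
  have hdecomp (t : ℝ) := eq_cross_cross_add_smul_of_dotProduct_self_eq_one (hunit t) (L t)
  refine ⟨hunit,
    eq_of_forall_hasDerivAt_zero fun t => hasDerivAt_dotProduct_of_rotation (hL t) (hγ t),
    hdecomp, fun t => ?_, fun t => by rw [← hdecomp t]⟩
  convert hasDerivAt_crossProduct_of_rotation (hγ t) (hL t) using 1
  rw [cross_cross_eq_smul_sub_smul, dotProduct_comm (Ω t), neg_smul, neg_add_eq_sub]

/-- **S¹-reduction of Chaplygin's marble to `(a, γ)`-variables.**  If `L̇ = L × Ω`,
`γ̇ = γ × Ω` and `⟨γ(0),γ(0)⟩ = 1`, then `⟨γ(t),γ(t)⟩ = 1` for all `t`,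
`ℓ₃ = ⟨L,γ⟩` is constant, and `a := γ × L` satisfies `L = a × γ + ℓ₃γ` and
`ȧ = −⟨Ω,L⟩γ + ⟨γ,Ω⟩L = −2Hγ + ⟨γ,Ω⟩(a × γ + ℓ₃γ)`. -/
theorem marble_s1_reduction
    (Ω : ℝ → Fin 3 → ℝ) (hΩ : Continuous Ω)
    (L γ : ℝ → Fin 3 → ℝ)
    (hL : ∀ t, HasDerivAt L (cross3 (L t) (Ω t)) t)
    (hγ : ∀ t, HasDerivAt γ (cross3 (γ t) (Ω t)) t)
    (hγ0 : dot3 (γ 0) (γ 0) = 1) :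
    (∀ t, dot3 (γ t) (γ t) = 1) ∧
    (∀ s t, dot3 (L s) (γ s) = dot3 (L t) (γ t)) ∧
    (∀ t, L t = cross3 (cross3 (γ t) (L t)) (γ t) + dot3 (L t) (γ t) • γ t) ∧
    (∀ t, HasDerivAt (fun s => cross3 (γ s) (L s))
        (-(dot3 (Ω t) (L t)) • γ t + dot3 (γ t) (Ω t) • L t) t) ∧
    (∀ t, -(dot3 (Ω t) (L t)) • γ t + dot3 (γ t) (Ω t) • L t
        = -(dot3 (Ω t) (L t)) • γ t
          + dot3 (γ t) (Ω t)
              • (cross3 (cross3 (γ t) (L t)) (γ t) + dot3 (L t) (γ t) • γ t)) :=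
  marble_s1_reduction_general Ω L γ hL hγ hγ0
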